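/- arXiv:1509.03712 — 3 statements merged into one kernel-verified Lean document; each statement's English description precedes it below -/
import Mathlib

section
/- For every positive integer m, the language L_m = { (0^i 1^i)^⌈m/2⌉ (0^i)^(m+1−2⌈m/2⌉) : i > 0 } over {0,1} (the set of strings consisting of m+1 alternating equal-length segments of 0's and 1's, beginning with 0's) is recognized by a deterministic finite automaton with at most m inkdots of advice. -/
/-- The marked word: the i-th symbol of `w` becomes `(w_i, true)` if `i ∈ S`,
and `(w_i, false)` otherwise. -/
def markWord {α : Type*} (w : List α) (S : Finset ℕ) : List (α × Bool) :=
  w.zipIdx.map (fun p => (p.1, decide (p.2 ∈ S)))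

/-- `L` is recognized by a deterministic finite automaton with at most `a n`
inkdots of advice on inputs of length `n`. -/
def RecognizedWithInkdots {α : Type*} (L : Set (List α)) (a : ℕ → ℕ) : Prop :=
  ∃ (σ : Type) (_ : Fintype σ) (M : DFA (α × Bool) σ) (h : ℕ → Finset ℕ),
    (∀ n, ∀ i ∈ h n, i < n) ∧
    (∀ n, (h n).card ≤ a n) ∧
    (∀ w : List α, w ∈ L ↔ markWord w (h w.length) ∈ M.accepts)

/-- The language `L_m = { (0^i 1^i)^⌈m/2⌉ (0^i)^(m+1-2⌈m/2⌉) : i > 0 }`: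
`m+1` alternating equal-length segments of `0`s and `1`s, beginning with `0`s
(`false` plays the role of `0` and `true` the role of `1`). -/
def Lm (m : ℕ) : Set (List Bool) :=
  { w | ∃ i : ℕ, 0 < i ∧
      w = (List.replicate ((m + 1) / 2)
              (List.replicate i false ++ List.replicate i true)).flatten ++
          (List.replicate (m + 1 - 2 * ((m + 1) / 2)) (List.replicate i false)).flatten }

/-!
The advice puts an inkdot on the last letter of each of the first `m` segments, whose common
length `i = n / (m + 1)` is determined by `n`. A DFA that counts the inkdots read so far (and dies
on an inkdot beyond the `m`-th) therefore knows the index of the current segment, checks that every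
letter has the parity of that index, and accepts iff it has read exactly `m` inkdots. Lengths not
divisible by `m + 1` get no inkdots, so the final count `0 ≠ m` rejects them.
-/

theorem DFA.evalFrom_mem_accept_iff_of_step {α σ : Type*} (M : DFA α σ) {d : σ}
    (hd : ∀ a, M.step d a = d) (hdacc : d ∉ M.accept) (s : ℕ → σ) (good : ℕ → α → Prop)
    [∀ p a, Decidable (good p a)] (x : List α)
    (hstep : ∀ p (hp : p < x.length), M.step (s p) x[p] = if good p x[p] then s (p + 1) else d) :
    M.evalFrom (s 0) x ∈ M.accept ↔
      (∀ p (hp : p < x.length), good p x[p]) ∧ s x.length ∈ M.accept := by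
  induction x generalizing s good with
  | nil => simp [DFA.evalFrom]
  | cons a x ih =>
    have ih' := ih (fun p => s (p + 1)) (fun p => good (p + 1))
      (fun p hp => hstep (p + 1) (by simpa using hp))
    have h0 := hstep 0 (by simp)
    rw [List.getElem_cons_zero] at h0
    rw [DFA.evalFrom_cons, h0]
    split_ifs with ha
    · rw [zero_add] at ih'
      simp only [List.length_cons, Nat.forall_lt_succ_left', List.getElem_cons_zero,
        List.getElem_cons_succ, ha, true_and, ih']
    · have hdead : M.evalFrom d x = d := List.foldl_fixed' hd x
      simp only [hdead, hdacc, false_iff, not_and]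
      exact fun h => absurd (h 0 (by simp)) ha

theorem List.flatMap_range_replicate {α : Type*} (g : ℕ → α) (n i : ℕ) :
    (List.range n).flatMap (fun j => List.replicate i (g j)) =
      (List.range (n * i)).map (fun p => g (p / i)) := by
  induction n with
  | zero => simp
  | succ n ih =>
    rw [List.range_succ, List.flatMap_append, ih, Nat.succ_mul, List.range_add, List.map_append,
      List.map_map]
    congr 1
    rw [List.flatMap_singleton]
    refine (List.eq_replicate_iff.mpr
      ⟨List.length_map .. |>.trans List.length_range, fun b hb => ?_⟩).symm
    obtain ⟨q, hq, rfl⟩ := List.mem_map.mp hb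
    have hq : q < i := List.mem_range.mp hq
    simp [Nat.mul_comm n i, Nat.mul_add_div (q.zero_le.trans_lt hq), Nat.div_eq_of_lt hq]

theorem List.flatMap_range_two_mul {α : Type*} (g : ℕ → List α) (hg : ∀ j, g (j + 2) = g j)
    (k : ℕ) :
    (List.range (2 * k)).flatMap g = (List.replicate k (g 0 ++ g 1)).flatten := by
  have hg' : ∀ j, g (2 * j) = g 0 ∧ g (2 * j + 1) = g 1 := by
    intro j
    induction j with
    | zero => simp
    | succ j ih => rw [Nat.mul_succ, hg, ← ih.1, add_right_comm, hg, ← ih.2]; simp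
  induction k with
  | zero => simp
  | succ k ih =>
    rw [Nat.mul_succ, List.range_succ, List.range_succ, List.append_assoc, List.flatMap_append, ih,
      List.replicate_succ', List.flatten_append]
    simp [hg']

namespace Lm

theorem word_eq (m i : ℕ) :
    (List.replicate ((m + 1) / 2) (List.replicate i false ++ List.replicate i true)).flatten ++
        (List.replicate (m + 1 - 2 * ((m + 1) / 2)) (List.replicate i false)).flatten =
      (List.range ((m + 1) * i)).map (fun p => (p / i).bodd) := by
  have hper : ∀ j, List.replicate i (j + 2).bodd = List.replicate i j.bodd := by simp
  rw [← List.flatMap_range_replicate]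
  obtain ⟨k, hk | hk⟩ := Nat.even_or_odd' (m + 1)
  · rw [hk, List.flatMap_range_two_mul _ hper, show 2 * k / 2 = k by omega]
    simp
  · rw [hk, List.range_succ, List.flatMap_append, List.flatMap_range_two_mul _ hper,
      show (2 * k + 1) / 2 = k by omega, show 2 * k + 1 - 2 * k = 1 by omega]
    simp

theorem mem_iff {m : ℕ} {w : List Bool} :
    w ∈ Lm m ↔ ∃ i, 0 < i ∧ w.length = (m + 1) * i ∧
      ∀ p (hp : p < w.length), w[p] = (p / i).bodd := by
  simp only [Lm, Set.mem_ofPred_eq, word_eq, List.ext_getElem_iff, List.length_map,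
    List.length_range, List.getElem_map, List.getElem_range]
  exact exists_congr fun i => and_congr_right fun _ => and_congr_right fun hw =>
    ⟨fun h p hp => h p hp (hw ▸ hp), fun h p hp _ => h p hp⟩

end Lm

@[simp]
theorem length_markWord {α : Type*} (w : List α) (S : Finset ℕ) :
    (markWord w S).length = w.length := by
  simp [markWord]

@[simp]
theorem getElem_markWord {α : Type*} (w : List α) (S : Finset ℕ) (p : ℕ)
    (hp : p < (markWord w S).length) :
    (markWord w S)[p] = (w[p]'(by simpa using hp), decide (p ∈ S)) := by
  simp [markWord]

/-- States `c ≤ m` count the inkdots read and expect letters of parity `c`; `m + 1` is dead. -/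
def parityCounterStep (m c : ℕ) (a : Bool × Bool) : ℕ :=
  if c ≤ m ∧ a.1 = c.bodd then c + a.2.toNat else m + 1

theorem parityCounterStep_le (m c : ℕ) (a : Bool × Bool) : parityCounterStep m c a ≤ m + 1 := by
  unfold parityCounterStep
  split_ifs
  · have := a.2.toNat_le
    omega
  · rfl

def parityCounterDFA (m : ℕ) : DFA (Bool × Bool) (Fin (m + 2)) where
  step c a := ⟨parityCounterStep m c a, Nat.lt_succ_of_le (parityCounterStep_le m c a)⟩
  start := 0
  accept := {c | (c : ℕ) = m}

theorem parityCounterDFA_mem_accepts_iff {m : ℕ} {x : List (Bool × Bool)} (c : ℕ → ℕ)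
    (h0 : c 0 = 0) (hle : ∀ p, c p ≤ m)
    (hc : ∀ p (hp : p < x.length), c (p + 1) = c p + x[p].2.toNat) :
    x ∈ (parityCounterDFA m).accepts ↔
      (∀ p (hp : p < x.length), x[p].1 = (c p).bodd) ∧ c x.length = m := by
  let s (p : ℕ) : Fin (m + 2) := ⟨c p, by have := hle p; omega⟩
  have hs0 : s 0 = (parityCounterDFA m).start := Fin.ext h0
  rw [DFA.mem_accepts, DFA.eval, ← hs0]
  refine (parityCounterDFA m).evalFrom_mem_accept_iff_of_step (d := Fin.last (m + 1))
    (fun a => Fin.ext ?_) (by simp [parityCounterDFA]) s (fun p a => a.1 = (c p).bodd) x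
    (fun p hp => Fin.ext ?_)
  · simp [parityCounterDFA, parityCounterStep]
  · simp only [parityCounterDFA, parityCounterStep, hle p, true_and, apply_ite Fin.val, hc p hp, s]
    rfl

def segmentEnds (m i : ℕ) : Finset ℕ :=
  (Finset.range (m * i)).filter (fun p => i ∣ p + 1)

theorem min_succ_div_eq (m i p : ℕ) :
    min ((p + 1) / i) m = min (p / i) m + if p ∈ segmentEnds m i then 1 else 0 := by
  rcases i.eq_zero_or_pos with rfl | hi
  · simp [segmentEnds]
  · have hlt : p < m * i ↔ p / i < m := (Nat.div_lt_iff_lt_mul hi).symm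
    rw [Nat.succ_div]
    simp only [segmentEnds, Finset.mem_filter, Finset.mem_range, hlt]
    split_ifs <;> omega

theorem card_segmentEnds_le (m i : ℕ) : (segmentEnds m i).card ≤ m := by
  rw [segmentEnds, Nat.card_multiples]
  exact Nat.div_le_of_le_mul (Nat.mul_comm m i).le

theorem markWord_segmentEnds_mem_accepts_iff {m i : ℕ} (hm : 0 < m) {w : List Bool}
    (hw : w.length = (m + 1) * i) :
    markWord w (segmentEnds m i) ∈ (parityCounterDFA m).accepts ↔
      0 < i ∧ ∀ p (hp : p < w.length), w[p] = (p / i).bodd := by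
  rw [parityCounterDFA_mem_accepts_iff (fun p => min (p / i) m) (by simp)
    (fun p => min_le_right _ _)
    (fun p _ => by simpa [Bool.toNat, Bool.cond_decide] using min_succ_div_eq m i p)]
  simp only [length_markWord, getElem_markWord, hw]
  rcases i.eq_zero_or_pos with rfl | hi
  · simp [hm.ne]
  · have hdiv : ∀ p < (m + 1) * i, min (p / i) m = p / i := fun p hp =>
      min_eq_left (Nat.lt_succ_iff.mp ((Nat.div_lt_iff_lt_mul hi).mpr hp))
    simp +contextual [hi, Nat.mul_div_cancel _ hi, hdiv]

theorem markWord_empty_not_mem_accepts {m : ℕ} (hm : 0 < m) (w : List Bool) :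
    markWord w ∅ ∉ (parityCounterDFA m).accepts := by
  rw [parityCounterDFA_mem_accepts_iff (fun _ => 0) rfl (fun _ => Nat.zero_le m) (by simp)]
  exact fun h => hm.ne h.2

def inkdotAdvice (m n : ℕ) : Finset ℕ :=
  if m + 1 ∣ n then segmentEnds m (n / (m + 1)) else ∅

theorem lt_of_mem_inkdotAdvice {m n p : ℕ} (hp : p ∈ inkdotAdvice m n) : p < n := by
  unfold inkdotAdvice at hp
  split_ifs at hp with hdvd
  · obtain ⟨i, rfl⟩ := hdvd
    have hp : p < m * i := (by simpa [segmentEnds] using hp : _ ∧ _).1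
    have := Nat.mul_le_mul_right i (m.le_add_right 1)
    omega
  · simp at hp

theorem card_inkdotAdvice_le (m n : ℕ) : (inkdotAdvice m n).card ≤ m := by
  unfold inkdotAdvice
  split_ifs
  · exact card_segmentEnds_le m _
  · simp

/-- `L_m` is recognized by a dfa with at most `m` inkdots of advice. -/
theorem Lm_mem_inkdots (m : ℕ) (hm : 0 < m) :
    RecognizedWithInkdots (Lm m) (fun _ => m) := by
  refine ⟨Fin (m + 2), inferInstance, parityCounterDFA m, inkdotAdvice m,
    fun _ _ => lt_of_mem_inkdotAdvice, card_inkdotAdvice_le m, fun w => ?_⟩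
  by_cases hdvd : m + 1 ∣ w.length
  · obtain ⟨i, hi⟩ := hdvd
    rw [inkdotAdvice, if_pos ⟨i, hi⟩, hi, Nat.mul_div_cancel_left _ m.succ_pos,
      markWord_segmentEnds_mem_accepts_iff hm hi, Lm.mem_iff]
    constructor
    · rintro ⟨j, hj, hlen, hw⟩
      obtain rfl : j = i := Nat.eq_of_mul_eq_mul_left m.succ_pos (hlen.symm.trans hi)
      exact ⟨hj, hw⟩
    · rintro ⟨hi', hw⟩
      exact ⟨i, hi', hi, hw⟩
  · rw [inkdotAdvice, if_neg hdvd]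
    refine iff_of_false (fun hw => hdvd ?_) (markWord_empty_not_mem_accepts hm w)
    obtain ⟨i, -, hlen, -⟩ := Lm.mem_iff.mp hw
    exact ⟨i, hlen⟩
end

section
/- For every positive integer m, the class REG/(m−1)(⊙) of languages over {0,1} recognized by a deterministic finite automaton with at most m−1 inkdots of advice is strictly contained in the class REG/m(⊙) of languages recognized by a deterministic finite automaton with at most m inkdots of advice. -/
theorem RecognizedWithInkdots.mono {α : Type*} {L : Set (List α)} {a b : ℕ → ℕ}
    (hL : RecognizedWithInkdots L a) (hab : ∀ n, a n ≤ b n) : RecognizedWithInkdots L b := by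
  obtain ⟨σ, hσ, M, h, hlt, hcard, hM⟩ := hL
  exact ⟨σ, hσ, M, h, hlt, fun n => (hcard n).trans (hab n), hM⟩

theorem Function.exists_iterate_add_eq_iterate {σ : Type*} [Finite σ] (f : σ → σ) :
    ∃ N p, 0 < p ∧ f^[N + p] = f^[N] := by
  obtain ⟨i, j, hij, hf⟩ := Finite.exists_ne_map_eq_of_infinite fun n : ℕ => f^[n]
  rcases Nat.lt_or_gt_of_ne hij with h | h
  · exact ⟨i, j - i, by omega, by rw [Nat.add_sub_cancel' h.le]; exact hf.symm⟩
  · exact ⟨j, i - j, by omega, by rw [Nat.add_sub_cancel' h.le]; exact hf⟩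

namespace DFA

variable {α σ : Type*}

theorem evalFrom_replicate (M : DFA α σ) (q : σ) (n : ℕ) (c : α) :
    M.evalFrom q (List.replicate n c) = (M.step · c)^[n] q := by
  induction n generalizing q with
  | zero => rfl
  | succ n ih => rw [List.replicate_succ, evalFrom_cons, ih, Function.iterate_succ_apply]

theorem exists_evalFrom_shift_eq [Finite σ] (M : DFA α σ) (c d : α) :
    ∃ N p, 0 < p ∧ ∀ q,
      M.evalFrom q (List.replicate N c ++ d :: List.replicate (N + p) c) =
        M.evalFrom q (List.replicate (N + p) c ++ d :: List.replicate N c) := by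
  obtain ⟨N, p, hp, hNp⟩ := Function.exists_iterate_add_eq_iterate (M.step · c)
  exact ⟨N, p, hp, fun q => by simp only [evalFrom_of_append, evalFrom_cons,
    evalFrom_replicate, hNp]⟩

end DFA

section Marking

variable {α : Type*}

theorem markWord_append (u v : List α) (S : Finset ℕ) :
    markWord (u ++ v) S =
      markWord u S ++ (v.zipIdx u.length).map (fun p => (p.1, decide (p.2 ∈ S))) := by
  simp [markWord, List.zipIdx_append]

theorem map_zipIdx_mark_of_forall_notMem (x : List α) (S : Finset ℕ) (k : ℕ)
    (hS : ∀ i ∈ S, i < k ∨ k + x.length ≤ i) :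
    (x.zipIdx k).map (fun p => (p.1, decide (p.2 ∈ S))) = x.map (·, false) := by
  refine List.ext_getElem (by simp) fun i h₁ h₂ => ?_
  have hi : k + i ∉ S := fun hi => by
    have := hS _ hi
    simp only [List.length_map, List.length_zipIdx] at h₁
    omega
  simp [List.getElem_zipIdx, hi]

theorem DFA.eval_markWord_append_append {σ : Type*} (M : DFA (α × Bool) σ) (S : Finset ℕ)
    (u x y v : List α) (hxy : x.length = y.length)
    (hS : ∀ i ∈ S, i < u.length ∨ u.length + x.length ≤ i)
    (hM : ∀ q, M.evalFrom q (x.map (·, false)) = M.evalFrom q (y.map (·, false))) :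
    M.eval (markWord (u ++ x ++ v) S) = M.eval (markWord (u ++ y ++ v) S) := by
  simp only [markWord_append, List.length_append, DFA.eval, DFA.evalFrom_of_append, hxy,
    map_zipIdx_mark_of_forall_notMem x S _ hS, map_zipIdx_mark_of_forall_notMem y S _ (hxy ▸ hS),
    hM]

end Marking

def holeWord (j r : ℕ) : List Bool :=
  List.replicate j true ++ false :: List.replicate r true

theorem length_holeWord (j r : ℕ) : (holeWord j r).length = j + r + 1 := by
  simp only [holeWord, List.length_append, List.length_replicate, List.length_cons]
  omega

theorem getElem?_holeWord {j r i : ℕ} (hi : i < j + r + 1) :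
    (holeWord j r)[i]? = some (decide (i ≠ j)) := by
  rcases lt_trichotomy i j with h | rfl | h
  · simp [holeWord, List.getElem?_append_left, h, h.ne]
  · simp [holeWord]
  · obtain ⟨l, rfl⟩ := Nat.exists_eq_add_of_lt h
    rw [holeWord, List.getElem?_append_right (by simp only [List.length_replicate]; omega),
      List.length_replicate, show j + l + 1 - j = l + 1 by omega, List.getElem?_cons_succ,
      List.getElem?_replicate_of_lt (by omega), decide_eq_true (by omega)]

theorem holeWord_add (a x y b : ℕ) :
    holeWord (a + x) (y + b) =
      List.replicate a true ++ holeWord x y ++ List.replicate b true := by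
  simp only [holeWord, List.replicate_add, List.append_assoc, List.cons_append]

def onesAt (T : ℕ → Finset ℕ) : Set (List Bool) :=
  {w | ∀ i ∈ T w.length, w[i]? = some true}

def markedOnesDFA : DFA (Bool × Bool) Bool where
  step q c := q && (!c.2 || c.1)
  start := true
  accept := {true}

theorem markedOnesDFA_evalFrom (q : Bool) (l : List (Bool × Bool)) :
    markedOnesDFA.evalFrom q l = (q && l.all fun c => !c.2 || c.1) := by
  induction l generalizing q with
  | nil => simp [DFA.evalFrom]
  | cons c l ih =>
    rw [DFA.evalFrom_cons, ih]
    simp [markedOnesDFA, Bool.and_assoc]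

theorem markWord_mem_markedOnesDFA_accepts (w : List Bool) (S : Finset ℕ)
    (hS : ∀ i ∈ S, i < w.length) :
    markWord w S ∈ markedOnesDFA.accepts ↔ ∀ i ∈ S, w[i]? = some true := by
  simp only [DFA.mem_accepts, DFA.eval, markedOnesDFA_evalFrom]
  simp only [markedOnesDFA, Set.mem_singleton_iff, Bool.true_and, List.all_eq_true, markWord,
    List.forall_mem_map, Prod.forall, List.mem_zipIdx_iff_getElem?]
  refine ⟨fun h i hi => ?_, fun h a i ha => ?_⟩
  · have hwi := List.getElem?_eq_getElem (hS i hi)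
    simpa [hwi, hi] using h _ i hwi
  · by_cases hi : i ∈ S
    · have := h i hi; simp_all
    · simp [hi]

theorem recognizedWithInkdots_onesAt (T : ℕ → Finset ℕ) (hT : ∀ n, ∀ i ∈ T n, i < n) :
    RecognizedWithInkdots (onesAt T) (fun n => (T n).card) :=
  ⟨Bool, inferInstance, markedOnesDFA, T, hT, fun _ => le_rfl, fun w =>
    (markWord_mem_markedOnesDFA_accepts w _ (hT _)).symm⟩

def checkpoints (m n : ℕ) : Finset ℕ :=
  ((Finset.range m).image fun k => (k + 1) * (n / (m + 1))).filter (· < n)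

theorem lt_of_mem_checkpoints {m n i : ℕ} (hi : i ∈ checkpoints m n) : i < n :=
  (Finset.mem_filter.mp hi).2

theorem card_checkpoints_le (m n : ℕ) : (checkpoints m n).card ≤ m :=
  (Finset.card_filter_le _ _).trans (Finset.card_image_le.trans (Finset.card_range m).le)

theorem mem_checkpoints_mul_iff {m t i : ℕ} (ht : 0 < t) :
    i ∈ checkpoints m ((m + 1) * t) ↔ ∃ k < m, (k + 1) * t = i := by
  simp only [checkpoints, Finset.mem_filter, Finset.mem_image, Finset.mem_range,
    Nat.mul_div_cancel_left t (Nat.succ_pos m)]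
  refine ⟨fun ⟨hi, _⟩ => hi, fun ⟨k, hk, hki⟩ => ⟨⟨k, hk, hki⟩, hki ▸ ?_⟩⟩
  exact Nat.mul_lt_mul_of_pos_right (by omega) ht

/-- The windows of radius `B` around `t, 2t, …, mt` are disjoint, so fewer than `m` points miss
one of them. -/
theorem Finset.exists_succ_mul_far {S : Finset ℕ} {m B t : ℕ} (hS : S.card < m)
    (hBt : 2 * B < t) : ∃ k < m, ∀ i ∈ S, i + B < (k + 1) * t ∨ (k + 1) * t + B < i := by
  obtain ⟨k, hk, hkS⟩ := Finset.exists_mem_notMem_of_card_lt_card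
    (s := S.image fun i => (i + B) / t - 1) (t := Finset.range m)
    (Finset.card_image_le.trans_lt (hS.trans_eq (Finset.card_range m).symm))
  refine ⟨k, Finset.mem_range.mp hk, fun i hi => ?_⟩
  by_contra! hnear
  have : (i + B) / t = k + 1 := Nat.div_eq_of_lt_le (by omega) (by rw [add_mul]; omega)
  exact hkS (Finset.mem_image.mpr ⟨i, hi, by omega⟩)

theorem DFA.eval_markWord_holeWord_shift {σ : Type*} (M : DFA (Bool × Bool) σ) {N p : ℕ}
    (hshift : ∀ q, M.evalFrom q (List.replicate N (true, false) ++
        (false, false) :: List.replicate (N + p) (true, false)) =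
      M.evalFrom q (List.replicate (N + p) (true, false) ++
        (false, false) :: List.replicate N (true, false)))
    (S : Finset ℕ) {j : ℕ} (b : ℕ) (hj : N ≤ j) (hS : ∀ i ∈ S, i + N < j ∨ j + N + p < i) :
    M.eval (markWord (holeWord j (N + p + b)) S) =
      M.eval (markWord (holeWord (j + p) (N + b)) S) := by
  obtain ⟨a, rfl⟩ := Nat.exists_eq_add_of_le' hj
  rw [show a + N + p = a + (N + p) by ring, holeWord_add, holeWord_add]
  refine M.eval_markWord_append_append S _ _ _ _ (by simp only [length_holeWord]; omega)
    (fun i hi => ?_) fun q => by simpa [holeWord] using hshift q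
  have := hS i hi
  simp only [List.length_replicate, length_holeWord]
  omega

theorem holeWord_mem_onesAt_checkpoints_iff {m t j r : ℕ} (ht : 0 < t)
    (hn : j + r + 1 = (m + 1) * t) :
    holeWord j r ∈ onesAt (checkpoints m) ↔ ∀ k < m, (k + 1) * t ≠ j := by
  simp only [onesAt, Set.mem_ofPred_eq, length_holeWord, hn, mem_checkpoints_mul_iff ht,
    forall_exists_index, and_imp, forall_apply_eq_imp_iff₂]
  refine forall₂_congr fun k hk => ?_
  rw [getElem?_holeWord (hn ▸ Nat.mul_lt_mul_of_pos_right (by omega) ht)]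
  simp

theorem not_recognizedWithInkdots_onesAt_checkpoints {m : ℕ} (hm : 0 < m) :
    ¬ RecognizedWithInkdots (onesAt (checkpoints m)) (fun _ => m - 1) := by
  rintro ⟨σ, _, M, h, -, hcard, hL⟩
  obtain ⟨N, p, hp, hshift⟩ := M.exists_evalFrom_shift_eq (true, false) (false, false)
  set t := 2 * (N + p) + 1 with ht
  set n := (m + 1) * t
  obtain ⟨k, hk, hfar⟩ := Finset.exists_succ_mul_far (m := m)
    ((hcard n).trans_lt (Nat.sub_lt hm one_pos))
    (show 2 * (N + p) < t by omega)
  set c := (k + 1) * t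
  have hcn : c + t ≤ n :=
    calc c + t = (k + 2) * t := by ring
      _ ≤ n := Nat.mul_le_mul_right t (by omega)
  obtain ⟨b, hb⟩ : ∃ b, n = c + (N + p) + 1 + b := ⟨n - (c + (N + p) + 1), by omega⟩
  have hNc : N ≤ c := le_trans (by omega) (Nat.le_mul_of_pos_left t k.succ_pos)
  have hlen₁ : (holeWord c (N + p + b)).length = n := by rw [length_holeWord]; omega
  have hlen₂ : (holeWord (c + p) (N + b)).length = n := by rw [length_holeWord]; omega
  have hnot : holeWord c (N + p + b) ∉ onesAt (checkpoints m) := fun hw =>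
    (holeWord_mem_onesAt_checkpoints_iff (t := t) (by omega) (by omega)).mp hw k hk rfl
  -- a multiple of `t` is never `c + p`, as `0 < p < t`
  have hmem : holeWord (c + p) (N + b) ∈ onesAt (checkpoints m) :=
    (holeWord_mem_onesAt_checkpoints_iff (t := t) (by omega) (by omega)).mpr fun k' _ he => by
      have := congrArg (· % t) he
      simp only [c, Nat.mul_mod_left, Nat.mul_add_mod_of_lt (show p < t by omega)] at this
      omega
  have heval := M.eval_markWord_holeWord_shift hshift (h n) b hNc fun i hi => by
    have := hfar i hi
    omega
  apply hnot
  rw [hL, hlen₁, DFA.mem_accepts, heval, ← hlen₂, ← DFA.mem_accepts, ← hL]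
  exact hmem

/-- `REG/(m-1)(⊙) ⊊ REG/m(⊙)` over the alphabet `{0,1}`. -/
theorem inkdot_constant_hierarchy (m : ℕ) (hm : 0 < m) :
    (∀ L : Set (List Bool),
        RecognizedWithInkdots L (fun _ => m - 1) → RecognizedWithInkdots L (fun _ => m)) ∧
    ∃ L : Set (List Bool),
      RecognizedWithInkdots L (fun _ => m) ∧ ¬ RecognizedWithInkdots L (fun _ => m - 1) :=
  ⟨fun _ hL => hL.mono fun _ => Nat.sub_le m 1, onesAt (checkpoints m),
    (recognizedWithInkdots_onesAt _ fun _ _ => lt_of_mem_checkpoints).mono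
      (card_checkpoints_le m),
    not_recognizedWithInkdots_onesAt_checkpoints hm⟩
end

section
/- Let f, g : ℕ → ℕ be functions such that f(n) tends to infinity, f(n)/n tends to 0, and there exists n₀ such that g(n) + 2 < f(n) for all n > n₀. Then the class REG/g(n)(⊙) of languages over {0,1} recognized by a deterministic finite automaton with at most g(n) inkdots of advice on inputs of length n is strictly contained in the class REG/f(n)(⊙) of languages recognized by a deterministic finite automaton with at most f(n) inkdots of advice on inputs of length n. -/
/-!
Finitely many short inputs can be hard-wired into the automaton (Myhill–Nerode), so the advice
bound only matters eventually; this gives the inclusion.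

For the separation, advice `S` on inputs of length `n` selects the words that carry `1` at every
position of `S`. Advice sets of size at most `g n + 1 ≤ f n` select pairwise different sets of
length-`n` words, whereas a fixed automaton reading at most `g n` inkdots selects at most as many
sets as there are advice sets of size `≤ g n`, which is fewer. Regular languages are countable, so
every automaton can be defeated at an input length of its own.
-/

section MarkWord

variable {α : Type*}

@[simp]
theorem markWord_length (w : List α) (S : Finset ℕ) : (markWord w S).length = w.length := by
  simp [markWord]

@[simp]
theorem map_fst_markWord (w : List α) (S : Finset ℕ) : (markWord w S).map Prod.fst = w := by
  simp [markWord, List.map_map, Function.comp_def]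

theorem forall_mem_markWord {w : List α} {S : Finset ℕ} {P : α × Bool → Prop} :
    (∀ x ∈ markWord w S, P x) ↔ ∀ a i, w[i]? = some a → P (a, decide (i ∈ S)) := by
  simp only [markWord, List.forall_mem_map, Prod.forall, List.mem_zipIdx_iff_getElem?]

end MarkWord

def allTrueAt (S : Finset ℕ) : Set (List Bool) :=
  {w | ∀ i ∈ S, w[i]? = some true}

def markedTrueDFA : DFA (Bool × Bool) Bool where
  step s x := s && (!x.2 || x.1)
  start := true
  accept := {true}

theorem markedTrueDFA_evalFrom (s : Bool) (l : List (Bool × Bool)) :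
    markedTrueDFA.evalFrom s l = (s && l.all fun x => !x.2 || x.1) := by
  induction l generalizing s with
  | nil => simp
  | cons x l ih =>
    rw [DFA.evalFrom_cons, ih]
    simp [markedTrueDFA, Bool.and_assoc]

theorem mem_markedTrueDFA_accepts {l : List (Bool × Bool)} :
    l ∈ markedTrueDFA.accepts ↔ ∀ x ∈ l, x.2 = true → x.1 = true := by
  rw [DFA.mem_accepts, DFA.eval, markedTrueDFA_evalFrom]
  simp [markedTrueDFA]

theorem markWord_mem_markedTrueDFA_accepts {w : List Bool} {S : Finset ℕ}
    (hS : ∀ i ∈ S, i < w.length) : markWord w S ∈ markedTrueDFA.accepts ↔ w ∈ allTrueAt S := by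
  rw [mem_markedTrueDFA_accepts, forall_mem_markWord]
  constructor
  · intro h i hi
    have hw := List.getElem?_eq_getElem (hS i hi)
    simpa [hw] using h _ i hw (by simpa using hi)
  · intro h a i ha hi
    simpa [ha] using h i (by simpa using hi)

theorem recognizedWithInkdots_allTrueAt {a : ℕ → ℕ} {adv : ℕ → Finset ℕ}
    (hlt : ∀ n, ∀ i ∈ adv n, i < n) (hcard : ∀ n, (adv n).card ≤ a n) :
    RecognizedWithInkdots {w | w ∈ allTrueAt (adv w.length)} a :=
  ⟨Bool, inferInstance, markedTrueDFA, adv, hlt, hcard, fun w =>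
    (markWord_mem_markedTrueDFA_accepts (hlt w.length)).symm⟩

namespace Language

variable {α : Type*}

theorem IsRegular.of_forall_length_gt [Finite α] {K K' : Language α} (hK' : K'.IsRegular)
    (N : ℕ) (h : ∀ x : List α, N < x.length → (x ∈ K ↔ x ∈ K')) : K.IsRegular := by
  refine IsRegular.of_finite_range_leftQuotient ?_
  have hsub : Set.range K.leftQuotient ⊆
      K.leftQuotient '' {x | x.length ≤ N} ∪ Set.range K'.leftQuotient := by
    rintro _ ⟨x, rfl⟩
    by_cases hx : x.length ≤ N
    · exact Or.inl ⟨x, hx, rfl⟩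
    · refine Or.inr ⟨x, Language.ext fun y => ?_⟩
      simp only [mem_leftQuotient]
      exact (h _ (by rw [List.length_append]; omega)).symm
  exact (((List.finite_length_le α N).image _).union
    hK'.finite_range_leftQuotient).subset hsub

instance [Finite α] {σ : Type*} [Finite σ] : Finite (DFA α σ) :=
  Finite.of_injective (fun M : DFA α σ => (M.step, M.start, M.accept)) fun M M' h => by
    cases M; cases M'; simp_all

theorem countable_setOf_isRegular [Finite α] : {L : Language α | L.IsRegular}.Countable := by
  refine (Set.countable_range fun M : Σ m, DFA α (Fin m) => M.2.accepts).mono ?_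
  rintro L ⟨σ, _, M, rfl⟩
  exact ⟨⟨_, M.reindex (Fintype.equivFin σ)⟩, DFA.accepts_reindex _ _⟩

end Language

theorem RecognizedWithInkdots.mono_of_forall_gt {α : Type*} [Finite α] {L : Set (List α)}
    {a b : ℕ → ℕ} (N : ℕ) (hab : ∀ n > N, a n ≤ b n) (hL : RecognizedWithInkdots L a) :
    RecognizedWithInkdots L b := by
  obtain ⟨σ, _, M, adv, hlt, hcard, hmem⟩ := hL
  let K : Language (α × Bool) :=
    {l | if N < l.length then l ∈ M.accepts else l.map Prod.fst ∈ L}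
  have hK_mem (l : List (α × Bool)) :
      l ∈ K ↔ if N < l.length then l ∈ M.accepts else l.map Prod.fst ∈ L := Iff.rfl
  have hK : K.IsRegular := Language.IsRegular.of_forall_length_gt ⟨σ, inferInstance, M, rfl⟩ N
    fun l hl => by simp [hK_mem, hl]
  obtain ⟨τ, _, M', hM'⟩ := hK
  refine ⟨τ, inferInstance, M', fun n => if N < n then adv n else ∅, fun n i hi => ?_,
    fun n => ?_, fun w => ?_⟩
  · dsimp only at hi
    split_ifs at hi
    exacts [hlt n i hi, absurd hi (Finset.notMem_empty i)]
  · dsimp only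
    split_ifs with hn
    exacts [(hcard n).trans (hab n hn), Nat.zero_le _]
  · rw [hM']
    by_cases hw : N < w.length
    · simp [hK_mem, hw, hmem]
    · simp [hK_mem, hw]

open Finset in
theorem Finset.exists_forall_ne_of_card_lt {α β γ : Type*} {s : Finset α} {t : Finset β}
    {F : α → γ} {G : β → γ} (hF : Set.InjOn F s) (h : #t < #s) :
    ∃ a ∈ s, ∀ b ∈ t, F a ≠ G b := by
  classical
  by_contra! hcon
  have himage : s.image F ⊆ t.image G := by
    intro y hy
    obtain ⟨a, ha, rfl⟩ := mem_image.1 hy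
    obtain ⟨b, hb, hab⟩ := hcon a ha
    exact mem_image.2 ⟨b, hb, hab.symm⟩
  have := card_le_card himage
  rw [card_image_of_injOn hF] at this
  exact (this.trans card_image_le).not_gt h

open Finset in
theorem Finset.card_filter_powerset_card_le_lt {α : Type*} {s : Finset α} {b : ℕ}
    (hb : b < #s) : #{t ∈ s.powerset | #t ≤ b} < #{t ∈ s.powerset | #t ≤ b + 1} := by
  refine card_lt_card ((ssubset_iff_of_subset
    (monotone_filter_right _ fun _ _ ht => Nat.le_succ_of_le ht)).2 ?_)
  obtain ⟨t, hts, ht⟩ := exists_subset_card_eq (show b + 1 ≤ #s from hb)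
  exact ⟨t, by simp [hts, ht], by simp [ht]⟩

theorem subset_of_allTrueAt_inter_subset {n : ℕ} {S S' : Finset ℕ} (hS : ∀ i ∈ S, i < n)
    (h : allTrueAt S ∩ {w | w.length = n} ⊆ allTrueAt S') : S' ⊆ S := by
  intro i hi
  have hw : List.ofFn (fun j : Fin n => decide ((j : ℕ) ∈ S)) ∈ allTrueAt S' :=
    h ⟨fun j hj => by simp [hS j hj, hj], List.length_ofFn⟩
  have := hw i hi
  simp only [List.getElem?_ofFn] at this
  split_ifs at this
  simpa using this

open Finset in
theorem exists_allTrueAt_not_iff_markWord_mem (K : Language (Bool × Bool)) {n b : ℕ}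
    (hbn : b < n) :
    ∃ S : Finset ℕ, (∀ i ∈ S, i < n) ∧ #S ≤ b + 1 ∧
      ∀ T : Finset ℕ, (∀ i ∈ T, i < n) → #T ≤ b →
        ∃ w : List Bool, w.length = n ∧ ¬ (w ∈ allTrueAt S ↔ markWord w T ∈ K) := by
  have hinj : Set.InjOn (fun S => allTrueAt S ∩ {w | w.length = n})
      ↑({S ∈ (range n).powerset | #S ≤ b + 1} : Finset (Finset ℕ)) := by
    intro S hS S' hS' (h : allTrueAt S ∩ _ = allTrueAt S' ∩ _)
    simp only [coe_filter, mem_powerset, subset_iff, mem_range] at hS hS'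
    exact Subset.antisymm
      (subset_of_allTrueAt_inter_subset hS'.1 (h.ge.trans Set.inter_subset_left))
      (subset_of_allTrueAt_inter_subset hS.1 (h.le.trans Set.inter_subset_left))
  obtain ⟨S, hS, hSne⟩ := exists_forall_ne_of_card_lt
    (G := fun T => {w | w.length = n ∧ markWord w T ∈ K}) hinj
    (card_filter_powerset_card_le_lt (by rwa [card_range]))
  simp only [mem_filter, mem_powerset, subset_iff, mem_range] at hS
  refine ⟨S, hS.1, hS.2, fun T hT hTb => ?_⟩
  have hT' : T ∈ {T ∈ (range n).powerset | #T ≤ b} := by simpa [subset_iff] using ⟨hT, hTb⟩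
  obtain ⟨w, hw⟩ := not_forall.1 (Set.ext_iff.not.1 (hSne T hT'))
  by_cases hwn : w.length = n
  · exact ⟨w, hwn, by simpa [hwn] using hw⟩
  · simp [hwn] at hw

theorem exists_recognizedWithInkdots_not_recognizedWithInkdots {f g : ℕ → ℕ} (N : ℕ)
    (hgf : ∀ n > N, g n < f n) (hgn : ∀ n > N, g n < n) :
    ∃ L : Set (List Bool), RecognizedWithInkdots L f ∧ ¬ RecognizedWithInkdots L g := by
  obtain ⟨e, he⟩ := Set.countable_iff_exists_subset_range.1
    (Language.countable_setOf_isRegular (α := Bool × Bool))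
  -- inputs of length `N + k + 1` are reserved for defeating the `k`-th regular language
  have hadv : ∀ n, ∃ S : Finset ℕ, (∀ i ∈ S, i < n) ∧ S.card ≤ f n ∧ (N < n →
      ∀ T : Finset ℕ, (∀ i ∈ T, i < n) → T.card ≤ g n →
        ∃ w : List Bool, w.length = n ∧ ¬ (w ∈ allTrueAt S ↔ markWord w T ∈ e (n - N - 1))) := by
    intro n
    by_cases hn : N < n
    · obtain ⟨S, hlt, hcard, hS⟩ :=
        exists_allTrueAt_not_iff_markWord_mem (e (n - N - 1)) (hgn n hn)
      exact ⟨S, hlt, hcard.trans (hgf n hn), fun _ => hS⟩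
    · exact ⟨∅, by simp, by simp, fun h => absurd h hn⟩
  choose adv hlt hcard hdiag using hadv
  refine ⟨{w | w ∈ allTrueAt (adv w.length)}, recognizedWithInkdots_allTrueAt hlt hcard, ?_⟩
  rintro ⟨σ, _, M, h, hhlt, hhcard, hmem⟩
  obtain ⟨k, hk⟩ := he ⟨σ, inferInstance, M, rfl⟩
  obtain ⟨w, hw, hne⟩ := hdiag (N + k + 1) (by omega) (h (N + k + 1)) (hhlt _) (hhcard _)
  rw [show N + k + 1 - N - 1 = k by omega, hk, ← hw] at hne
  exact hne (hmem w)

open Filter in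
theorem inkdot_function_hierarchy_general (f g : ℕ → ℕ)
    (hf2 : Tendsto (fun n => (f n : ℝ) / n) atTop (nhds 0))
    (hg : ∃ n₀ : ℕ, ∀ n > n₀, g n + 2 < f n) :
    (∀ L : Set (List Bool),
        RecognizedWithInkdots L g → RecognizedWithInkdots L f) ∧
    ∃ L : Set (List Bool),
      RecognizedWithInkdots L f ∧ ¬ RecognizedWithInkdots L g := by
  obtain ⟨n₀, hn₀⟩ := hg
  obtain ⟨N₁, hN₁⟩ := eventually_atTop.1 (hf2.eventually_lt_const one_pos)
  have hfn : ∀ n > N₁, f n < n := fun n hn => by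
    have := hN₁ n hn.le
    rw [div_lt_one (by exact_mod_cast (N₁.zero_le.trans_lt hn))] at this
    exact_mod_cast this
  refine ⟨fun L => RecognizedWithInkdots.mono_of_forall_gt n₀ fun n hn => by grind, ?_⟩
  exact exists_recognizedWithInkdots_not_recognizedWithInkdots (max n₀ N₁)
    (fun n hn => by grind) (fun n hn => by grind)

open Filter in
/-- if `f ∈ ω(1) ∩ o(n)` and `g(n) + 2 < f(n)` for all sufficiently
large `n`, then `REG/g(n)(⊙) ⊊ REG/f(n)(⊙)` over the alphabet `{0,1}`. -/
theorem inkdot_function_hierarchy (f g : ℕ → ℕ)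
    (hf1 : Tendsto f atTop atTop)
    (hf2 : Tendsto (fun n => (f n : ℝ) / n) atTop (nhds 0))
    (hg : ∃ n₀ : ℕ, ∀ n > n₀, g n + 2 < f n) :
    (∀ L : Set (List Bool),
        RecognizedWithInkdots L g → RecognizedWithInkdots L f) ∧
    ∃ L : Set (List Bool),
      RecognizedWithInkdots L f ∧ ¬ RecognizedWithInkdots L g :=
  inkdot_function_hierarchy_general f g hf2 hg
end
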